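/- Let k be a strictly positive-definite kernel on 𝒳, let {S_j}_{j∈J} be a partition of 𝒳 into pairwise disjoint nonempty subsets, and let X̄ be a finite tuple of pairwise distinct points of 𝒳. Define k_Nys(x,x') = k(x,X̄)·K(X̄,X̄)⁻¹·k(X̄,x') and k_comp(x,x') = k(x,x') if x,x' lie in the same cell S_j, and k_comp(x,x') = k_Nys(x,x') otherwise. Then for every finite tuple X of pairwise distinct points of 𝒳 containing at least one point not in X̄, the spectral norms satisfy ‖K(X,X) − K_comp(X,X)‖₂ < ‖K(X,X) − K_Nys(X,X)‖₂, where K_comp(X,X) and K_Nys(X,X) denote the matrices with entries k_comp(xᵢ,xⱼ) and k_Nys(xᵢ,xⱼ) respectively. -/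

import Mathlib

open scoped BigOperators

/-- A function `k` is a strictly positive-definite kernel if for every finite list of
pairwise distinct points `x₁,…,xₘ` and all real coefficients not all zero,
`∑ᵢⱼ αᵢ αⱼ k(xᵢ,xⱼ) > 0`. -/
def StrictPosDefKernel {𝒳 : Type*} (k : 𝒳 → 𝒳 → ℝ) : Prop :=
  ∀ (m : ℕ) (x : Fin m → 𝒳), Function.Injective x →
    ∀ α : Fin m → ℝ, α ≠ 0 → 0 < ∑ i, ∑ j, α i * α j * k (x i) (x j)

/-- The Nyström kernel based on landmark points `Xb`:
`k_Nys(x,x') = k(x,Xb)·K(Xb,Xb)⁻¹·k(Xb,x')`. -/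
noncomputable def nystromKernel {𝒳 : Type*} (k : 𝒳 → 𝒳 → ℝ) {r : ℕ} (Xb : Fin r → 𝒳)
    (x x' : 𝒳) : ℝ :=
  ∑ i, ∑ j, k x (Xb i) *
    ((Matrix.of fun a b => k (Xb a) (Xb b) : Matrix (Fin r) (Fin r) ℝ)⁻¹ i j) * k (Xb j) x'

open Classical in
/-- The compositional kernel: the original kernel `k` within a cell of the partition `S`,
and the Nyström kernel based on the landmark points `Xb` across cells. -/
noncomputable def compositionalKernel {𝒳 J : Type*} (k : 𝒳 → 𝒳 → ℝ) (S : J → Set 𝒳)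
    {r : ℕ} (Xb : Fin r → 𝒳) (x x' : 𝒳) : ℝ :=
  if ∃ j, x ∈ S j ∧ x' ∈ S j then k x x' else nystromKernel k Xb x x'

/-- The spectral norm (operator 2-norm) of a real matrix: the operator norm of the associated
linear map between Euclidean spaces, i.e. the largest singular value. -/
noncomputable def matrixSpectralNorm {m n : ℕ} (M : Matrix (Fin m) (Fin n) ℝ) : ℝ :=
  ‖LinearMap.toContinuousLinearMap (Matrix.toEuclideanLin M)‖

/-!
`E := K(X,X) - K_Nys(X,X)` is the Schur complement of `K(X̄,X̄)` in the kernel matrix of the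
points `(X̄, X)`, so `vᵀ E v` is the kernel quadratic form at `(-K(X̄,X̄)⁻¹ K(X̄,X) v, v)`. Hence
`E` is positive semidefinite, vanishes on the rows and columns of landmark points, and
`vᵀ E v = 0` exactly when `v` is supported on landmark indices.

`K(X,X) - K_comp(X,X) = E - D`, where `D` keeps the diagonal cell blocks of `E`, and
`vᵀ D v = ∑ₜ vₜᵀ E vₜ` over the cell pieces `vₜ` of `v`. For a unit vector both `vᵀ E v` and
`vᵀ D v` lie in `[0, ‖E‖]`, so `|vᵀ (E - D) v| = ‖E‖` forces one of them to vanish and the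
other to equal `‖E‖`. But `v` is supported on landmark indices iff every `vₜ` is, so both
vanish and `‖E‖ = 0`, which a point of `X` outside `X̄` rules out. Since `E - D` is symmetric,
its norm is attained as such a `|vᵀ (E - D) v|`.
-/

open Matrix Finset
open scoped RealInnerProductSpace

namespace Matrix

lemma dotProduct_mulVec_self_eq_sum {ι R : Type*} [Fintype ι] [CommRing R] (E : Matrix ι ι R)
    (v : ι → R) : v ⬝ᵥ E *ᵥ v = ∑ a, ∑ b, v a * v b * E a b := by
  simp only [dotProduct, mulVec, mul_sum]
  exact sum_congr rfl fun a _ => sum_congr rfl fun b _ => by ring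

section Cells

variable {ι J R : Type*} [Fintype ι] [CommRing R]

lemma sum_dotProduct_mulVec_indicator_fiber [DecidableEq J] (E : Matrix ι ι R) (g : ι → J)
    (v : ι → R) :
    ∑ t ∈ univ.image g, (g ⁻¹' {t}).indicator v ⬝ᵥ E *ᵥ (g ⁻¹' {t}).indicator v =
      v ⬝ᵥ (of fun a b => if g a = g b then E a b else 0) *ᵥ v := by
  simp only [dotProduct_mulVec_self_eq_sum, of_apply]
  rw [sum_comm]
  refine sum_congr rfl fun a _ => ?_
  rw [sum_comm]
  refine sum_congr rfl fun b _ => ?_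
  rw [sum_eq_single_of_mem (g a) (mem_image_of_mem g (mem_univ a)) fun t _ ht => by
    simp [Set.indicator_of_notMem (s := g ⁻¹' {t}) (a := a) (Ne.symm ht)]]
  by_cases h : g a = g b <;> simp [h, eq_comm]

lemma sum_dotProduct_indicator_fiber [DecidableEq ι] [DecidableEq J] (g : ι → J) (v : ι → R) :
    ∑ t ∈ univ.image g, (g ⁻¹' {t}).indicator v ⬝ᵥ (g ⁻¹' {t}).indicator v = v ⬝ᵥ v := by
  have h1 : (of fun a b => if g a = g b then (1 : Matrix ι ι R) a b else 0) = 1 := by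
    ext a b
    by_cases h : a = b <;> simp [one_apply, h]
  simpa [h1] using sum_dotProduct_mulVec_indicator_fiber (1 : Matrix ι ι R) g v

end Cells

section NullCone

variable {ι : Type*} [Fintype ι] {E : Matrix ι ι ℝ} {L : Set ι}

lemma dotProduct_mulVec_indicator_compl (hzero : ∀ a b, a ∈ L ∨ b ∈ L → E a b = 0)
    (v : ι → ℝ) :
    Lᶜ.indicator v ⬝ᵥ E *ᵥ Lᶜ.indicator v = v ⬝ᵥ E *ᵥ v := by
  classical
  simp only [dotProduct_mulVec_self_eq_sum]
  refine sum_congr rfl fun a _ => sum_congr rfl fun b _ => ?_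
  by_cases ha : a ∈ L
  · simp [hzero a b (Or.inl ha)]
  by_cases hb : b ∈ L
  · simp [hzero a b (Or.inr hb)]
  simp [ha, hb]

lemma dotProduct_mulVec_self_nonneg_of_pos_on_compl (hzero : ∀ a b, a ∈ L ∨ b ∈ L → E a b = 0)
    (hpos : ∀ v ≠ 0, (∀ a ∈ L, v a = 0) → 0 < v ⬝ᵥ E *ᵥ v) (v : ι → ℝ) : 0 ≤ v ⬝ᵥ E *ᵥ v := by
  rw [← dotProduct_mulVec_indicator_compl hzero]
  by_cases h : Lᶜ.indicator v = 0
  · simp [h]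
  · exact (hpos _ h fun a ha => Set.indicator_of_notMem (by simpa using ha) _).le

lemma dotProduct_mulVec_self_eq_zero_iff_of_pos_on_compl (hzero : ∀ a b, a ∈ L ∨ b ∈ L → E a b = 0)
    (hpos : ∀ v ≠ 0, (∀ a ∈ L, v a = 0) → 0 < v ⬝ᵥ E *ᵥ v) (v : ι → ℝ) :
    v ⬝ᵥ E *ᵥ v = 0 ↔ ∀ a ∉ L, v a = 0 := by
  rw [← dotProduct_mulVec_indicator_compl hzero]
  constructor
  · intro h a ha
    by_contra hva
    have hne : Lᶜ.indicator v ≠ 0 := Function.ne_iff.2 ⟨a, by simpa [ha] using hva⟩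
    exact (hpos _ hne fun b hb => Set.indicator_of_notMem (by simpa using hb) _).ne' h
  · intro h
    have : Lᶜ.indicator v = 0 := funext fun a => by by_cases ha : a ∈ L <;> simp [ha, h]
    simp [this]

end NullCone

section SpectralNorm

variable {m : ℕ}

lemma dotProduct_self_ofLp (x : EuclideanSpace ℝ (Fin m)) : x.ofLp ⬝ᵥ x.ofLp = ‖x‖ ^ 2 := by
  rw [← real_inner_self_eq_norm_sq]; rfl

lemma abs_dotProduct_mulVec_self_le (M : Matrix (Fin m) (Fin m) ℝ) (v : Fin m → ℝ) :
    |v ⬝ᵥ M *ᵥ v| ≤ matrixSpectralNorm M * (v ⬝ᵥ v) := by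
  set T := LinearMap.toContinuousLinearMap M.toEuclideanLin
  set x := WithLp.toLp 2 v
  calc |v ⬝ᵥ M *ᵥ v| = |⟪T x, x⟫| := rfl
    _ ≤ ‖T x‖ * ‖x‖ := abs_real_inner_le_norm _ _
    _ ≤ ‖T‖ * ‖x‖ * ‖x‖ := by gcongr; exact T.le_opNorm _
    _ = matrixSpectralNorm M * (v ⬝ᵥ v) := by rw [mul_assoc, ← sq, ← dotProduct_self_ofLp]; rfl

lemma matrixSpectralNorm_pos_of_dotProduct_mulVec_self_pos {M : Matrix (Fin m) (Fin m) ℝ}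
    {v : Fin m → ℝ} (h : 0 < v ⬝ᵥ M *ᵥ v) : 0 < matrixSpectralNorm M := by
  refine (norm_nonneg _ : 0 ≤ matrixSpectralNorm M).lt_of_ne' fun h0 => ?_
  have := abs_dotProduct_mulVec_self_le M v
  rw [show matrixSpectralNorm M = 0 from h0, zero_mul] at this
  linarith [le_abs_self (v ⬝ᵥ M *ᵥ v)]

lemma IsHermitian.exists_abs_dotProduct_mulVec_self_eq_matrixSpectralNorm [NeZero m]
    {M : Matrix (Fin m) (Fin m) ℝ} (hM : M.IsHermitian) :
    ∃ v : Fin m → ℝ, v ⬝ᵥ v = 1 ∧ |v ⬝ᵥ M *ᵥ v| = matrixSpectralNorm M := by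
  set T := LinearMap.toContinuousLinearMap M.toEuclideanLin
  obtain ⟨x₀, hx₀, hmax⟩ := (isCompact_sphere (0 : EuclideanSpace ℝ (Fin m)) 1).exists_isMaxOn
    (NormedSpace.sphere_nonempty.2 zero_le_one) (f := fun x => |⟪T x, x⟫|) (by fun_prop)
  rw [mem_sphere_zero_iff_norm] at hx₀
  have hnorm : x₀.ofLp ⬝ᵥ x₀.ofLp = 1 := by rw [dotProduct_self_ofLp, hx₀, one_pow]
  refine ⟨x₀.ofLp, hnorm, le_antisymm ?_ ?_⟩
  · simpa [hnorm] using abs_dotProduct_mulVec_self_le M x₀.ofLp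
  · rw [matrixSpectralNorm,
      T.norm_eq_iSup_rayleighQuotient (isSymmetric_toEuclideanLin_iff.mpr hM)]
    refine ciSup_le fun x => ?_
    rcases eq_or_ne x 0 with rfl | hx
    · simp
    have hu : ‖‖x‖⁻¹ • x‖ = 1 := norm_smul_inv_norm hx
    rw [← T.rayleigh_smul x (inv_ne_zero (norm_ne_zero_iff.2 hx)),
      ContinuousLinearMap.rayleighQuotient, hu, one_pow, div_one, T.reApplyInnerSelf_apply,
      RCLike.re_to_real]
    exact hmax (mem_sphere_zero_iff_norm.2 hu)

end SpectralNorm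

end Matrix

theorem matrixSpectralNorm_offBlockDiag_lt {m : ℕ} {J : Type*} [DecidableEq J]
    {E : Matrix (Fin m) (Fin m) ℝ} (hE : E.IsHermitian) (g : Fin m → J) (L : Set (Fin m))
    (hpsd : ∀ v, 0 ≤ v ⬝ᵥ E *ᵥ v) (hnull : ∀ v, v ⬝ᵥ E *ᵥ v = 0 ↔ ∀ a ∉ L, v a = 0)
    {a₀ : Fin m} (ha₀ : a₀ ∉ L) :
    matrixSpectralNorm (of fun a b => if g a = g b then 0 else E a b) < matrixSpectralNorm E := by
  have : NeZero m := NeZero.of_pos a₀.pos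
  set N := matrixSpectralNorm E
  set D : Matrix (Fin m) (Fin m) ℝ := of fun a b => if g a = g b then E a b else 0
  have hF : (of fun a b => if g a = g b then 0 else E a b) = E - D := by
    ext a b
    by_cases h : g a = g b <;> simp [D, h]
  have hD : D.IsHermitian := by
    refine IsHermitian.ext fun a b => ?_
    by_cases h : g a = g b
    · simpa [D, h] using hE.apply a b
    · simp [D, h, Ne.symm h]
  have hN : 0 < N := matrixSpectralNorm_pos_of_dotProduct_mulVec_self_pos (v := Pi.single a₀ 1) <|
    (hpsd _).lt_of_ne' fun h => by simpa using (hnull _).1 h a₀ ha₀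
  obtain ⟨v, hv, hvF⟩ := (hE.sub hD).exists_abs_dotProduct_mulVec_self_eq_matrixSpectralNorm
  rw [hF, ← hvF, sub_mulVec, dotProduct_sub]
  set q := v ⬝ᵥ E *ᵥ v
  set d := v ⬝ᵥ D *ᵥ v
  have hd : d = ∑ t ∈ univ.image g, (g ⁻¹' {t}).indicator v ⬝ᵥ E *ᵥ (g ⁻¹' {t}).indicator v :=
    (sum_dotProduct_mulVec_indicator_fiber E g v).symm
  have hq_le : q ≤ N := by
    simpa [hv] using (le_abs_self q).trans (abs_dotProduct_mulVec_self_le E v)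
  have hd_le : d ≤ N := by
    calc d ≤ ∑ t ∈ univ.image g, N * ((g ⁻¹' {t}).indicator v ⬝ᵥ (g ⁻¹' {t}).indicator v) :=
          hd ▸ sum_le_sum fun t _ => (le_abs_self _).trans (abs_dotProduct_mulVec_self_le E _)
      _ = N := by rw [← mul_sum, sum_dotProduct_indicator_fiber, hv, mul_one]
  -- The null cone of `E` is a coordinate subspace, so `v` is null iff all its cell pieces are.
  have hqd : q = 0 ↔ d = 0 := by
    rw [hnull, hd, sum_eq_zero_iff_of_nonneg fun t _ => hpsd _]
    simp only [hnull]
    refine ⟨fun h t _ a ha => ?_, fun h a ha => ?_⟩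
    · simp [h a ha]
    · simpa using h (g a) (mem_image_of_mem g (mem_univ a)) a ha
  have hq_nonneg : 0 ≤ q := hpsd v
  have hd_nonneg : 0 ≤ d := hd ▸ sum_nonneg fun t _ => hpsd _
  rw [abs_sub_lt_iff]
  constructor
  · by_contra! h
    have := hqd.2 (by linarith)
    linarith
  · by_contra! h
    have := hqd.1 (by linarith)
    linarith

def kernelMatrix {𝒳 ι κ R : Type*} (k : 𝒳 → 𝒳 → R) (x : ι → 𝒳) (y : κ → 𝒳) : Matrix ι κ R :=
  of fun i j => k (x i) (y j)

namespace StrictPosDefKernel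

variable {𝒳 ι : Type*} [Fintype ι] {k : 𝒳 → 𝒳 → ℝ}

lemma sum_pos_of_injective (hk : StrictPosDefKernel k) {y : ι → 𝒳}
    (hy : Function.Injective y) {w : ι → ℝ} (hw : w ≠ 0) :
    0 < ∑ i, ∑ j, w i * w j * k (y i) (y j) := by
  let e := (Fintype.equivFin ι).symm
  have hwe : w ∘ e ≠ 0 := fun h => hw (funext fun i => by simpa using congrFun h (e.symm i))
  have h := hk _ (y ∘ e) (hy.comp e.injective) (w ∘ e) hwe
  simp only [Function.comp_apply] at h
  rwa [← e.sum_comp, sum_congr rfl fun i _ => (e.sum_comp _).symm]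

lemma dotProduct_mulVec_kernelMatrix_pos (hk : StrictPosDefKernel k) {y : ι → 𝒳} {w : ι → ℝ}
    (hy : Set.InjOn y (Function.support w)) (hw : w ≠ 0) :
    0 < w ⬝ᵥ kernelMatrix k y y *ᵥ w := by
  classical
  set s := univ.filter (w · ≠ 0)
  obtain ⟨i₀, hi₀⟩ := Function.ne_iff.1 hw
  have := hk.sum_pos_of_injective (ι := s) (y := y ∘ Subtype.val) (w := w ∘ Subtype.val)
    (fun i j hij => Subtype.ext (hy (mem_filter.1 i.2).2 (mem_filter.1 j.2).2 hij))
    (fun h => hi₀ (by simpa using congrFun h ⟨i₀, by simpa [s] using hi₀⟩))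
  have hs (f : ι → ℝ) (hf : ∀ i, w i = 0 → f i = 0) : ∑ i ∈ s, f i = ∑ i, f i :=
    sum_filter_of_ne fun i _ hfi hwi => hfi (hf i hwi)
  calc 0 < ∑ i : s, ∑ j : s, w i * w j * k (y i) (y j) := this
    _ = ∑ i ∈ s, ∑ j ∈ s, w i * w j * k (y i) (y j) := by
      rw [← sum_coe_sort s]
      exact sum_congr rfl fun i _ => sum_coe_sort s (fun j => w i * w j * k (y i) (y j))
    _ = w ⬝ᵥ kernelMatrix k y y *ᵥ w := by
      rw [dotProduct_mulVec_self_eq_sum, hs _ fun i hi => by simp [hi]]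
      exact sum_congr rfl fun i _ => hs _ fun j hj => by simp [hj]

lemma isUnit_det_kernelMatrix [DecidableEq ι] (hk : StrictPosDefKernel k) {y : ι → 𝒳}
    (hy : Function.Injective y) : IsUnit (kernelMatrix k y y).det := by
  refine isUnit_iff_ne_zero.2 fun h => ?_
  obtain ⟨v, hv, hAv⟩ := exists_mulVec_eq_zero_iff.2 h
  have := hk.dotProduct_mulVec_kernelMatrix_pos hy.injOn hv
  rw [hAv, dotProduct_zero] at this
  exact lt_irrefl 0 this

end StrictPosDefKernel

lemma kernelMatrix_sumElim {𝒳 ι κ ι' κ' R : Type*} (k : 𝒳 → 𝒳 → R) (x : ι → 𝒳) (x' : ι' → 𝒳)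
    (y : κ → 𝒳) (y' : κ' → 𝒳) :
    kernelMatrix k (Sum.elim x x') (Sum.elim y y') =
      fromBlocks (kernelMatrix k x y) (kernelMatrix k x y') (kernelMatrix k x' y)
        (kernelMatrix k x' y') := by
  ext (i | i) (j | j) <;> rfl

lemma conjTranspose_kernelMatrix {𝒳 ι κ : Type*} {k : 𝒳 → 𝒳 → ℝ} (hsym : ∀ x y, k x y = k y x)
    (x : ι → 𝒳) (y : κ → 𝒳) : (kernelMatrix k x y)ᴴ = kernelMatrix k y x := by
  ext i j
  simp [kernelMatrix, hsym]

lemma of_nystromKernel {𝒳 ι κ : Type*} (k : 𝒳 → 𝒳 → ℝ) {r : ℕ} (Xb : Fin r → 𝒳)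
    (x : ι → 𝒳) (y : κ → 𝒳) :
    (of fun a b => nystromKernel k Xb (x a) (y b)) =
      kernelMatrix k x Xb * (kernelMatrix k Xb Xb)⁻¹ * kernelMatrix k Xb y := by
  ext a b
  simp only [of_apply, nystromKernel, mul_apply, sum_mul]
  exact sum_comm

noncomputable def nystromResidual {𝒳 ι : Type*} (k : 𝒳 → 𝒳 → ℝ) {r : ℕ} (Xb : Fin r → 𝒳)
    (X : ι → 𝒳) : Matrix ι ι ℝ :=
  kernelMatrix k X X - kernelMatrix k X Xb * (kernelMatrix k Xb Xb)⁻¹ * kernelMatrix k Xb X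

namespace nystromResidual

variable {𝒳 ι : Type*} {k : 𝒳 → 𝒳 → ℝ} {r : ℕ} {Xb : Fin r → 𝒳} {X : ι → 𝒳}

lemma eq_sub_of_nystromKernel :
    nystromResidual k Xb X =
      (of fun a b => k (X a) (X b)) - of fun a b => nystromKernel k Xb (X a) (X b) := by
  rw [of_nystromKernel]; rfl

lemma apply (a b : ι) :
    nystromResidual k Xb X a b = k (X a) (X b) - nystromKernel k Xb (X a) (X b) := by
  rw [eq_sub_of_nystromKernel]; rfl

lemma isHermitian (hsym : ∀ x y, k x y = k y x) : (nystromResidual k Xb X).IsHermitian := by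
  simp only [IsHermitian, nystromResidual, conjTranspose_sub, conjTranspose_mul,
    conjTranspose_nonsing_inv, conjTranspose_kernelMatrix hsym, Matrix.mul_assoc]

lemma apply_eq_zero (hA : IsUnit (kernelMatrix k Xb Xb).det) {a b : ι}
    (h : X a ∈ Set.range Xb ∨ X b ∈ Set.range Xb) : nystromResidual k Xb X a b = 0 := by
  rw [nystromResidual, Matrix.sub_apply, sub_eq_zero]
  rcases h with ⟨c, hc⟩ | ⟨c, hc⟩
  · have hrow : ∀ i, kernelMatrix k X Xb a i = kernelMatrix k Xb Xb c i := by
      simp [kernelMatrix, hc]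
    rw [Matrix.mul_assoc, mul_apply]
    simp_rw [hrow]
    rw [← mul_apply, mul_nonsing_inv_cancel_left _ _ hA]
    simp [kernelMatrix, hc]
  · have hcol : ∀ i, kernelMatrix k Xb X i b = kernelMatrix k Xb Xb i c := by
      simp [kernelMatrix, hc]
    rw [mul_apply]
    simp_rw [hcol]
    rw [← mul_apply, nonsing_inv_mul_cancel_right _ _ hA]
    simp [kernelMatrix, hc]

lemma dotProduct_mulVec_eq [Fintype ι] (hA : IsUnit (kernelMatrix k Xb Xb).det) (v : ι → ℝ) :
    v ⬝ᵥ nystromResidual k Xb X *ᵥ v =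
      let w := Sum.elim (-(((kernelMatrix k Xb Xb)⁻¹ * kernelMatrix k Xb X) *ᵥ v)) v
      w ⬝ᵥ kernelMatrix k (Sum.elim Xb X) (Sum.elim Xb X) *ᵥ w := by
  dsimp only
  rw [kernelMatrix_sumElim, fromBlocks_mulVec, sumElim_dotProduct_sumElim, Sum.elim_comp_inl,
    Sum.elim_comp_inr, mulVec_neg, mulVec_neg, mulVec_mulVec, mulVec_mulVec, ← Matrix.mul_assoc,
    ← Matrix.mul_assoc, mul_nonsing_inv _ hA, Matrix.one_mul, neg_add_cancel, dotProduct_zero,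
    nystromResidual, sub_mulVec, dotProduct_sub, dotProduct_add, dotProduct_neg, zero_add]
  ring

lemma dotProduct_mulVec_pos [Fintype ι] (hk : StrictPosDefKernel k) (hXb : Function.Injective Xb)
    (hX : Function.Injective X) {v : ι → ℝ} (hv : v ≠ 0)
    (hvL : ∀ a, X a ∈ Set.range Xb → v a = 0) :
    0 < v ⬝ᵥ nystromResidual k Xb X *ᵥ v := by
  rw [dotProduct_mulVec_eq (hk.isUnit_det_kernelMatrix hXb)]
  refine hk.dotProduct_mulVec_kernelMatrix_pos ?_ ?_
  · rintro (i | a) hi (j | b) hj hij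
    · exact congrArg Sum.inl (hXb hij)
    · exact absurd (hvL b ⟨i, hij⟩) hj
    · exact absurd (hvL a ⟨j, hij.symm⟩) hi
    · exact congrArg Sum.inr (hX hij)
  · obtain ⟨a, ha⟩ := Function.ne_iff.1 hv
    exact Function.ne_iff.2 ⟨Sum.inr a, ha⟩

end nystromResidual

lemma exists_mem_and_mem_iff_eq {𝒳 J : Type*} {S : J → Set 𝒳}
    (hS : ∀ j j', j ≠ j' → Disjoint (S j) (S j')) {x y : 𝒳} {i j : J} (hx : x ∈ S i)
    (hy : y ∈ S j) : (∃ l, x ∈ S l ∧ y ∈ S l) ↔ i = j := by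
  refine ⟨fun ⟨l, hxl, hyl⟩ => ?_, fun h => ⟨j, h ▸ hx, hy⟩⟩
  have hcell {z : 𝒳} {i' : J} (hz : z ∈ S i') (hzl : z ∈ S l) : i' = l := by
    by_contra h
    exact Set.disjoint_left.1 (hS _ _ h) hz hzl
  rw [hcell hx hxl, hcell hy hyl]

lemma of_sub_compositionalKernel {𝒳 J ι : Type*} [DecidableEq J] (k : 𝒳 → 𝒳 → ℝ)
    {S : J → Set 𝒳} (hS : ∀ j j', j ≠ j' → Disjoint (S j) (S j')) {r : ℕ} (Xb : Fin r → 𝒳)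
    {X : ι → 𝒳} {g : ι → J} (hg : ∀ a, X a ∈ S (g a)) :
    (of fun a b => k (X a) (X b)) - (of fun a b => compositionalKernel k S Xb (X a) (X b)) =
      of fun a b => if g a = g b then 0 else nystromResidual k Xb X a b := by
  ext a b
  have hcell := exists_mem_and_mem_iff_eq hS (hg a) (hg b)
  by_cases h : g a = g b
  · simp [compositionalKernel, h, hcell.2 h]
  · simp [compositionalKernel, h, mt hcell.1 h, nystromResidual.apply]

theorem compositional_better_than_nystrom_spectral_general
    {𝒳 J : Type*} (k : 𝒳 → 𝒳 → ℝ)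
    (hsym : ∀ x y, k x y = k y x)
    (hk : StrictPosDefKernel k)
    (S : J → Set 𝒳)
    (hSdisj : ∀ j j', j ≠ j' → Disjoint (S j) (S j'))
    (hScover : (⋃ j, S j) = Set.univ)
    (r : ℕ) (Xb : Fin r → 𝒳) (hinj : Function.Injective Xb)
    (m : ℕ) (X : Fin m → 𝒳) (hinjX : Function.Injective X)
    (hnew : ∃ a, ∀ b, X a ≠ Xb b) :
    matrixSpectralNorm
        ((Matrix.of fun a b => k (X a) (X b)) -
          (Matrix.of fun a b => compositionalKernel k S Xb (X a) (X b))) <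
      matrixSpectralNorm
        ((Matrix.of fun a b => k (X a) (X b)) -
          (Matrix.of fun a b => nystromKernel k Xb (X a) (X b))) := by
  classical
  obtain ⟨a₀, ha₀⟩ := hnew
  choose g hg using fun a => Set.mem_iUnion.1 (hScover.symm ▸ Set.mem_univ (X a))
  have hA := hk.isUnit_det_kernelMatrix hinj
  have hzero (a b : Fin m) (h : a ∈ X ⁻¹' Set.range Xb ∨ b ∈ X ⁻¹' Set.range Xb) :=
    nystromResidual.apply_eq_zero hA h
  have hpos (v : Fin m → ℝ) (hv : v ≠ 0) (hvL : ∀ a ∈ X ⁻¹' Set.range Xb, v a = 0) :=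
    nystromResidual.dotProduct_mulVec_pos hk hinj hinjX hv hvL
  rw [of_sub_compositionalKernel k hSdisj Xb hg, ← nystromResidual.eq_sub_of_nystromKernel]
  exact matrixSpectralNorm_offBlockDiag_lt (nystromResidual.isHermitian hsym) g _
    (dotProduct_mulVec_self_nonneg_of_pos_on_compl hzero hpos)
    (dotProduct_mulVec_self_eq_zero_iff_of_pos_on_compl hzero hpos) (a₀ := a₀)
    fun ⟨c, hc⟩ => ha₀ c hc.symm

/-- for a strictly positive-definite kernel `k`, a partition `S` of `𝒳` into
pairwise disjoint nonempty cells, landmark points `Xb`, and any tuple `X` of pairwise distinct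
points containing at least one point not among the landmarks, the compositional kernel matrix
approximates `K(X,X)` strictly better than the Nyström kernel matrix in spectral norm. -/
theorem compositional_better_than_nystrom_spectral
    {𝒳 J : Type*} (k : 𝒳 → 𝒳 → ℝ)
    (hsym : ∀ x y, k x y = k y x)
    (hk : StrictPosDefKernel k)
    (S : J → Set 𝒳)
    (hSne : ∀ j, (S j).Nonempty)
    (hSdisj : ∀ j j', j ≠ j' → Disjoint (S j) (S j'))
    (hScover : (⋃ j, S j) = Set.univ)
    (r : ℕ) (Xb : Fin r → 𝒳) (hinj : Function.Injective Xb)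
    (m : ℕ) (X : Fin m → 𝒳) (hinjX : Function.Injective X)
    (hnew : ∃ a, ∀ b, X a ≠ Xb b) :
    matrixSpectralNorm
        ((Matrix.of fun a b => k (X a) (X b)) -
          (Matrix.of fun a b => compositionalKernel k S Xb (X a) (X b))) <
      matrixSpectralNorm
        ((Matrix.of fun a b => k (X a) (X b)) -
          (Matrix.of fun a b => nystromKernel k Xb (X a) (X b))) :=
  compositional_better_than_nystrom_spectral_general k hsym hk S hSdisj hScover r Xb hinj m X hinjX
    hnew
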